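/- arXiv:2111.05822 — 4 statements merged into one kernel-verified Lean document; each statement's English description precedes it below -/
import Mathlib

section
/- Let X and M be reflexive Banach spaces, a : X × M → ℝ a continuous bilinear form, A : X → M' the induced operator ⟨Av, w⟩ = a(v, w), and V = ker A. If there exists β > 0 such that for all nonzero w ∈ M, sup over nonzero v ∈ X of a(v,w)/(‖v‖_X ‖w‖_M) ≥ β, then for every continuous linear functional f ∈ X' vanishing on V, there exists a unique w ∈ M such that a(v, w) = ⟨f, v⟩ for all v ∈ X, and ‖w‖_M ≤ (1/β)‖f‖_{X'}. -/
open NormedSpace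

/-! The inf-sup condition says exactly that `w ↦ a(·, w) : M → X'` is bounded below by `β`,
so it is injective with closed range. By Hahn–Banach, in a reflexive `X` a closed subspace of
`X'` is the annihilator of its pre-annihilator; the pre-annihilator of the range is `V`, so
every `f` vanishing on `V` lies in the range. -/

theorem Submodule.exists_dual_forall_eq_zero_and_ne_of_notMem {E : Type*}
    [NormedAddCommGroup E] [NormedSpace ℝ E] {S : Submodule ℝ E} (hS : IsClosed (S : Set E))
    {x : E} (hx : x ∉ S) : ∃ φ : StrongDual ℝ E, (∀ s ∈ S, φ s = 0) ∧ φ x ≠ 0 := by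
  obtain ⟨φ, u, hxu, hbound⟩ := geometric_hahn_banach_point_closed S.convex hS hx
  have hu : u < 0 := by simpa using hbound 0 S.zero_mem
  refine ⟨φ, fun s hs => ?_, by linarith⟩
  by_contra hφs
  -- a linear functional bounded below on a subspace vanishes there: rescale `s` below `u`
  have := hbound (((u - 1) / φ s) • s) (S.smul_mem _ hs)
  rw [map_smul, smul_eq_mul, div_mul_cancel₀ _ hφs] at this
  linarith

theorem Submodule.mem_of_isClosed_of_surjective_inclusionInDoubleDual {E : Type*}
    [NormedAddCommGroup E] [NormedSpace ℝ E]
    (hE : Function.Surjective (inclusionInDoubleDual ℝ E))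
    {S : Submodule ℝ (StrongDual ℝ E)} (hS : IsClosed (S : Set (StrongDual ℝ E)))
    {f : StrongDual ℝ E} (hf : ∀ v : E, (∀ g ∈ S, g v = 0) → f v = 0) : f ∈ S := by
  by_contra hfS
  obtain ⟨φ, hφS, hφf⟩ := S.exists_dual_forall_eq_zero_and_ne_of_notMem hS hfS
  obtain ⟨v, rfl⟩ := hE φ
  exact hφf (hf v hφS)

theorem ContinuousLinearMap.mul_norm_le_norm_flip_apply_of_le_iSup {X M : Type*}
    [NormedAddCommGroup X] [NormedSpace ℝ X] [NormedAddCommGroup M] [NormedSpace ℝ M]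
    (a : X →L[ℝ] M →L[ℝ] ℝ) {β : ℝ} {w : M}
    (hβw : w ≠ 0 → β ≤ ⨆ v : {v : X // v ≠ 0}, a v.1 w / (‖v.1‖ * ‖w‖)) :
    β * ‖w‖ ≤ ‖a.flip w‖ := by
  rcases eq_or_ne w 0 with rfl | hw
  · simp
  have hw' : 0 < ‖w‖ := norm_pos_iff.2 hw
  have hsup : (⨆ v : {v : X // v ≠ 0}, a v.1 w / (‖v.1‖ * ‖w‖)) ≤ ‖a.flip w‖ / ‖w‖ := by
    refine Real.iSup_le (fun v => ?_) (by positivity)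
    have hv : 0 < ‖v.1‖ := norm_pos_iff.2 v.2
    have hle : a v.1 w ≤ ‖a.flip w‖ * ‖v.1‖ :=
      (Real.le_norm_self _).trans ((a.flip w).le_opNorm v.1)
    rw [div_le_div_iff₀ (by positivity) hw']
    nlinarith
  exact (le_div_iff₀ hw').1 ((hβw hw).trans hsup)

theorem babuska_brezzi_unique_solution_general
    {X M : Type*} [NormedAddCommGroup X] [NormedSpace ℝ X]
    [NormedAddCommGroup M] [NormedSpace ℝ M] [CompleteSpace M]
    (hXrefl : Function.Surjective (inclusionInDoubleDual ℝ X))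
    (a : X →L[ℝ] M →L[ℝ] ℝ)
    (V : Set X) (hV : V = {v : X | ∀ w : M, a v w = 0})
    (β : ℝ) (hβ : 0 < β)
    (hinfsup : ∀ w : M, w ≠ 0 →
      β ≤ ⨆ v : {v : X // v ≠ 0}, a v.1 w / (‖v.1‖ * ‖w‖)) :
    ∀ f : X →L[ℝ] ℝ, (∀ v ∈ V, f v = 0) →
      (∃! w : M, ∀ v : X, a v w = f v) ∧
      (∀ w : M, (∀ v : X, a v w = f v) → ‖w‖ ≤ (1 / β) * ‖f‖) := by
  intro f hf
  have hlow (w : M) : β * ‖w‖ ≤ ‖a.flip w‖ :=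
    a.mul_norm_le_norm_flip_apply_of_le_iSup (hinfsup w)
  have hanti : AntilipschitzWith ⟨β⁻¹, (inv_pos.2 hβ).le⟩ a.flip :=
    a.flip.antilipschitz_of_bound fun w => by
      change ‖w‖ ≤ β⁻¹ * ‖a.flip w‖
      rw [inv_mul_eq_div, le_div_iff₀ hβ, mul_comm]
      exact hlow w
  have hsol_iff (w : M) : (∀ v : X, a v w = f v) ↔ a.flip w = f :=
    ⟨fun h => ContinuousLinearMap.ext h, fun h v => DFunLike.congr_fun h v⟩
  have hrange : f ∈ LinearMap.range (a.flip : M →ₗ[ℝ] StrongDual ℝ X) := by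
    refine Submodule.mem_of_isClosed_of_surjective_inclusionInDoubleDual hXrefl ?_ fun v hv => ?_
    · rw [LinearMap.coe_range]
      exact hanti.isClosed_range a.flip.uniformContinuous
    · exact hf v (hV ▸ fun w => hv _ ⟨w, rfl⟩)
  obtain ⟨w₀, hw₀⟩ := hrange
  refine ⟨⟨w₀, (hsol_iff w₀).2 hw₀, fun w hw => hanti.injective ?_⟩, fun w hw => ?_⟩
  · exact ((hsol_iff w).1 hw).trans hw₀.symm
  · rw [one_div, inv_mul_eq_div, le_div_iff₀ hβ, mul_comm, ← (hsol_iff w).1 hw]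
    exact hlow w

/-- Babuška–Brezzi: `X, M` reflexive Banach spaces, `a : X × M → ℝ` a continuous
bilinear form, `A : X → M'` with `⟨Av, w⟩ = a(v,w)`, `V = ker A`.  If the inf-sup
condition holds with constant `β > 0`, then for every `f ∈ X'` vanishing on `V`
there is a unique `w ∈ M` with `a(v,w) = ⟨f,v⟩` for all `v ∈ X`, and
`‖w‖ ≤ (1/β)‖f‖`. -/
theorem babuska_brezzi_unique_solution
    {X M : Type*} [NormedAddCommGroup X] [NormedSpace ℝ X] [CompleteSpace X]
    [NormedAddCommGroup M] [NormedSpace ℝ M] [CompleteSpace M]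
    (hXrefl : Function.Surjective (inclusionInDoubleDual ℝ X))
    (hMrefl : Function.Surjective (inclusionInDoubleDual ℝ M))
    (a : X →L[ℝ] M →L[ℝ] ℝ)
    (V : Set X) (hV : V = {v : X | ∀ w : M, a v w = 0})
    (β : ℝ) (hβ : 0 < β)
    (hinfsup : ∀ w : M, w ≠ 0 →
      β ≤ ⨆ v : {v : X // v ≠ 0}, a v.1 w / (‖v.1‖ * ‖w‖)) :
    ∀ f : X →L[ℝ] ℝ, (∀ v ∈ V, f v = 0) →
      (∃! w : M, ∀ v : X, a v w = f v) ∧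
      (∀ w : M, (∀ v : X, a v w = f v) → ‖w‖ ≤ (1 / β) * ‖f‖) :=
  babuska_brezzi_unique_solution_general hXrefl a V hV β hβ hinfsup
end

section
/- Let X and M be reflexive Banach spaces, a : X × M → ℝ a continuous bilinear form satisfying the inf-sup condition with constant β > 0, let A : X → M' be the induced operator and V = ker A. Then the adjoint operator A' : M → X', defined by ⟨v, A'w⟩ = a(v, w), is an isomorphism from M onto the polar set {f ∈ X' : f(v) = 0 for all v ∈ V}, and the inverse has operator norm at most 1/β. -/
open NormedSpace

/-!
The inf-sup condition says exactly that `β ‖w‖ ≤ ‖A' w‖`, so `A'` is injective and, `M` being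
complete, has closed range. In a reflexive space every functional on `X'` is evaluation at some
`v ∈ X`, so Hahn–Banach separation shows that a closed subspace of `X'` is the annihilator of its
own preannihilator; for the range of `A'` the preannihilator is `V`, whose annihilator is the
polar set.
-/

theorem ContinuousLinearMap.ciSup_div_norm_mul_le {X : Type*} [NormedAddCommGroup X]
    [NormedSpace ℝ X] (f : X →L[ℝ] ℝ) {c : ℝ} (hc : 0 < c) :
    ⨆ v : {v : X // v ≠ 0}, f v.1 / (‖v.1‖ * c) ≤ ‖f‖ / c := by
  refine Real.iSup_le (fun v => ?_) (by positivity)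
  have hv : 0 < ‖v.1‖ := norm_pos_iff.mpr v.2
  calc f v.1 / (‖v.1‖ * c) ≤ ‖f‖ * ‖v.1‖ / (‖v.1‖ * c) := by
        gcongr
        exact (le_abs_self _).trans (f.le_opNorm v.1)
    _ = ‖f‖ / c := by field_simp

theorem norm_le_inv_mul_norm_flip_of_infsup {X M : Type*} [NormedAddCommGroup X]
    [NormedSpace ℝ X] [NormedAddCommGroup M] [NormedSpace ℝ M] (a : X →L[ℝ] M →L[ℝ] ℝ)
    {β : ℝ} (hβ : 0 < β)
    (hinfsup : ∀ w : M, w ≠ 0 → β ≤ ⨆ v : {v : X // v ≠ 0}, a v.1 w / (‖v.1‖ * ‖w‖))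
    (w : M) : ‖w‖ ≤ (1 / β) * ‖a.flip w‖ := by
  rcases eq_or_ne w 0 with rfl | hw
  · simp
  have hw' : 0 < ‖w‖ := norm_pos_iff.mpr hw
  have hβw : β ≤ ‖a.flip w‖ / ‖w‖ :=
    (hinfsup w hw).trans ((a.flip w).ciSup_div_norm_mul_le hw')
  rw [le_div_iff₀ hw'] at hβw
  rw [one_div, ← div_eq_inv_mul, le_div_iff₀ hβ, mul_comm]
  exact hβw

theorem Submodule.mem_of_isClosed_of_forall_ker_eq_zero {X : Type*} [NormedAddCommGroup X]
    [NormedSpace ℝ X] (hX : Function.Surjective (inclusionInDoubleDual ℝ X))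
    {S : Submodule ℝ (X →L[ℝ] ℝ)} (hS : IsClosed (S : Set (X →L[ℝ] ℝ)))
    {f : X →L[ℝ] ℝ} (hf : ∀ v : X, (∀ g ∈ S, g v = 0) → f v = 0) : f ∈ S := by
  by_contra hfS
  obtain ⟨φ, u, hφS, hφf⟩ := geometric_hahn_banach_closed_point S.convex hS hfS
  -- `φ` is bounded above on the subspace `S`, hence vanishes there.
  have hφ_zero : ∀ g ∈ S, φ g = 0 := by
    intro g hg
    by_contra hφg
    have hscaled := hφS (((|u| + 1) / φ g) • g) (S.smul_mem _ hg)
    rw [map_smul, smul_eq_mul, div_mul_cancel₀ _ hφg] at hscaled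
    linarith [le_abs_self u]
  obtain ⟨v, rfl⟩ := hX φ
  have hu : 0 < u := by simpa using hφS 0 S.zero_mem
  have hfv : f v = 0 := hf v hφ_zero
  rw [dual_def] at hφf
  linarith

theorem babuska_brezzi_adjoint_iso_general
    {X M : Type*} [NormedAddCommGroup X] [NormedSpace ℝ X]
    [NormedAddCommGroup M] [NormedSpace ℝ M] [CompleteSpace M]
    (hXrefl : Function.Surjective (inclusionInDoubleDual ℝ X))
    (a : X →L[ℝ] M →L[ℝ] ℝ)
    (V : Set X) (hV : V = {v : X | ∀ w : M, a v w = 0})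
    (β : ℝ) (hβ : 0 < β)
    (hinfsup : ∀ w : M, w ≠ 0 →
      β ≤ ⨆ v : {v : X // v ≠ 0}, a v.1 w / (‖v.1‖ * ‖w‖)) :
    (∀ w : M, ∀ v ∈ V, a.flip w v = 0) ∧
    Function.Injective a.flip ∧
    (∀ f : X →L[ℝ] ℝ, (∀ v ∈ V, f v = 0) → ∃ w : M, a.flip w = f) ∧
    (∀ w : M, ‖w‖ ≤ (1 / β) * ‖a.flip w‖) := by
  subst hV
  have hbound := norm_le_inv_mul_norm_flip_of_infsup a hβ hinfsup
  have hanti : AntilipschitzWith ⟨1 / β, by positivity⟩ a.flip :=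
    a.flip.antilipschitz_of_bound hbound
  refine ⟨fun w v hv => hv w, hanti.injective, fun f hf => ?_, hbound⟩
  have hclosed : IsClosed ((a.flip : M →ₗ[ℝ] X →L[ℝ] ℝ).range : Set (X →L[ℝ] ℝ)) := by
    rw [LinearMap.coe_range]
    exact hanti.isClosed_range a.flip.uniformContinuous
  exact Submodule.mem_of_isClosed_of_forall_ker_eq_zero hXrefl hclosed
    fun v hv => hf v fun w => hv (a.flip w) ⟨w, rfl⟩

/-- Babuška–Brezzi: under the inf-sup condition with constant `β > 0`, the adjoint
operator `A' : M → X'`, `(A'w)(v) = a(v,w)`, is an isomorphism from `M` onto the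
polar set `{f ∈ X' : f|_V = 0}` of the kernel `V` of `A`, and its inverse has
norm at most `1/β`. -/
theorem babuska_brezzi_adjoint_iso
    {X M : Type*} [NormedAddCommGroup X] [NormedSpace ℝ X] [CompleteSpace X]
    [NormedAddCommGroup M] [NormedSpace ℝ M] [CompleteSpace M]
    (hXrefl : Function.Surjective (inclusionInDoubleDual ℝ X))
    (hMrefl : Function.Surjective (inclusionInDoubleDual ℝ M))
    (a : X →L[ℝ] M →L[ℝ] ℝ)
    (V : Set X) (hV : V = {v : X | ∀ w : M, a v w = 0})
    (β : ℝ) (hβ : 0 < β)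
    (hinfsup : ∀ w : M, w ≠ 0 →
      β ≤ ⨆ v : {v : X // v ≠ 0}, a v.1 w / (‖v.1‖ * ‖w‖)) :
    (∀ w : M, ∀ v ∈ V, a.flip w v = 0) ∧
    Function.Injective a.flip ∧
    (∀ f : X →L[ℝ] ℝ, (∀ v ∈ V, f v = 0) → ∃ w : M, a.flip w = f) ∧
    (∀ w : M, ‖w‖ ≤ (1 / β) * ‖a.flip w‖) :=
  babuska_brezzi_adjoint_iso_general hXrefl a V hV β hβ hinfsup
end

section
/- Let 1 < p, q < ∞ and k, k' real numbers. Suppose λ : ℝ³ → ℝ is a polynomial such that λ = u + v with ∫(ρ^{k−1}|u|)^p < ∞, ∫(ρ^{k}|∇u|)^p < ∞, ∫(ρ^{k'−1}|v|)^q < ∞, ∫(ρ^{k'}|∇v|)^q < ∞, where ρ(x) = (1+|x|²)^{1/2}. Then the degree of λ is at most max(⌊1 − 3/p − k⌋, ⌊1 − 3/q − k'⌋). -/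
/-! If `d = deg P` exceeds both bounds, the top homogeneous part `P_d` is nonzero at some
`e`, so on a ball `K` around `e` one has `|P (t • y)| ≳ t ^ d` for large `t`, while
`1 ≤ ρ (t • y) ≲ t`, hence `ρ ^ (k - 1) ≳ t ^ κ` with `κ = min (k - 1) 0`.
At each point of `t • K` one of `|u|`, `|v|` is at least `|P| / 2`, so a Markov-type bound gives
`t³ vol K ≲ t^(-(κ + d) p) ∫ (ρ^(k-1) |u|)^p + t^(-(κ' + d) q) ∫ (ρ^(k'-1) |v|)^q`.
The exponents `(κ + d) p + 3` and `(κ' + d) q + 3` are positive precisely because `d` exceeds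
both floors, so letting `t → ∞` forces `vol K = 0`. -/

open MeasureTheory

/-- The weight `ρ(x) = (1 + |x|²)^{1/2}` on ℝ³. -/
noncomputable def rho (x : Fin 3 → ℝ) : ℝ :=
  Real.sqrt (1 + ∑ i, x i ^ 2)

open Filter Topology Metric Pointwise

namespace MvPolynomial

variable {σ R : Type*} [CommSemiring R]

theorem IsHomogeneous.eval_smul {φ : MvPolynomial σ R} {n : ℕ} (hφ : φ.IsHomogeneous n)
    (t : R) (y : σ → R) : eval (t • y) φ = t ^ n * eval y φ := by
  rw [eval_eq, eval_eq, Finset.mul_sum]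
  refine Finset.sum_congr rfl fun d hd => ?_
  have hdeg : ∑ i ∈ d.support, d i = n := by
    rw [← hφ (mem_support_iff.mp hd), Finsupp.weight_apply, Finsupp.sum]
    simp
  simp only [Pi.smul_apply, smul_eq_mul, mul_pow, Finset.prod_mul_distrib,
    Finset.prod_pow_eq_pow_sum, hdeg]
  ring

theorem eval_smul_eq_sum_homogeneousComponent (P : MvPolynomial σ R) (t : R) (y : σ → R) :
    eval (t • y) P =
      ∑ j ∈ Finset.range (P.totalDegree + 1), t ^ j * eval y (homogeneousComponent j P) := by
  conv_lhs => rw [← sum_homogeneousComponent P]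
  rw [map_sum]
  exact Finset.sum_congr rfl fun j _ => (homogeneousComponent_isHomogeneous j P).eval_smul t y

theorem homogeneousComponent_totalDegree_ne_zero {P : MvPolynomial σ R} (hP : P ≠ 0) :
    homogeneousComponent P.totalDegree P ≠ 0 := by
  obtain ⟨m, hm, hdeg⟩ := Finset.exists_mem_eq_sup P.support (support_nonempty.mpr hP)
    fun s => s.sum fun _ e => e
  refine ne_zero_iff.mpr ⟨m, ?_⟩
  rw [coeff_homogeneousComponent, if_pos (by rw [totalDegree, hdeg]; rfl)]
  exact mem_support_iff.mp hm

theorem exists_closedBall_forall_le_abs_eval_homogeneousComponent_totalDegree [Fintype σ]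
    {P : MvPolynomial σ ℝ} (hP : P ≠ 0) : ∃ e : σ → ℝ, ∃ δ > 0, ∃ a > 0,
      ∀ y ∈ closedBall e δ, a ≤ |eval y (homogeneousComponent P.totalDegree P)| := by
  set Q := homogeneousComponent P.totalDegree P
  obtain ⟨e, he⟩ : ∃ e, eval e Q ≠ 0 := by
    by_contra! h
    exact homogeneousComponent_totalDegree_ne_zero hP (funext fun x => by simpa using h x)
  have hnear : ∀ᶠ y in 𝓝 e, |eval e Q| / 2 < |eval y Q| :=
    ((continuous_eval Q).abs.tendsto e).eventually_const_lt (half_lt_self (abs_pos.mpr he))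
  obtain ⟨δ, hδ, hball⟩ := nhds_basis_closedBall.eventually_iff.mp hnear
  exact ⟨e, δ, hδ, |eval e Q| / 2, by positivity, fun y hy => (hball hy).le⟩

theorem exists_pos_mul_pow_le_abs_eval_smul [Fintype σ] {P : MvPolynomial σ ℝ} (hP : P ≠ 0) :
    ∃ e : σ → ℝ, ∃ δ > 0, ∃ c > 0, ∀ᶠ t in atTop, ∀ y ∈ closedBall e δ,
      c * t ^ P.totalDegree ≤ |eval (t • y) P| := by
  obtain ⟨e, δ, hδ, a, ha, hlead⟩ :=
    exists_closedBall_forall_le_abs_eval_homogeneousComponent_totalDegree hP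
  set d := P.totalDegree
  set lower : (σ → ℝ) → ℝ := fun y =>
    ∑ j ∈ Finset.range d, |eval y (homogeneousComponent j P)|
  obtain ⟨M, hM⟩ := (isCompact_closedBall e δ).exists_bound_of_continuousOn
    (continuous_finsetSum _ fun j _ => (continuous_eval _).abs).continuousOn (f := lower)
  refine ⟨e, δ, hδ, a / 2, by positivity, ?_⟩
  filter_upwards [eventually_ge_atTop 1, eventually_ge_atTop (2 * M / a)] with t ht1 htM y hy
  have ht0 : 0 < t := by linarith
  have hlower : |∑ j ∈ Finset.range d, t ^ j * eval y (homogeneousComponent j P)|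
      ≤ t ^ d / t * M := by
    calc _ ≤ ∑ j ∈ Finset.range d, t ^ d / t * |eval y (homogeneousComponent j P)| := by
          refine (Finset.abs_sum_le_sum_abs _ _).trans (Finset.sum_le_sum fun j hj => ?_)
          rw [abs_mul, abs_of_nonneg (by positivity)]
          gcongr
          rw [le_div_iff₀ ht0, ← pow_succ]
          exact pow_le_pow_right₀ ht1 (Finset.mem_range.mp hj)
      _ = t ^ d / t * lower y := by rw [Finset.mul_sum]
      _ ≤ t ^ d / t * M := by
          gcongr
          exact (le_abs_self _).trans (hM y hy)
  have hMt : M / t ≤ a / 2 := by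
    rw [div_le_iff₀ ht0]; rw [div_le_iff₀ ha] at htM; linarith
  rw [eval_smul_eq_sum_homogeneousComponent, Finset.sum_range_succ]
  calc a / 2 * t ^ d ≤ t ^ d * a - t ^ d / t * M := by
        have : t ^ d / t * M = t ^ d * (M / t) := by ring
        rw [this]; nlinarith [pow_pos ht0 d]
    _ ≤ |t ^ d * eval y (homogeneousComponent d P)| - |∑ j ∈ Finset.range d,
          t ^ j * eval y (homogeneousComponent j P)| := by
        rw [abs_mul, abs_of_nonneg (by positivity)]
        gcongr
        exact hlead y hy
    _ ≤ _ := by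
        rw [add_comm]
        exact abs_sub_abs_le_abs_add _ _

end MvPolynomial

theorem measureReal_le_integral_div_add_integral_div {α : Type*} [MeasurableSpace α]
    {μ : Measure α} {f g : α → ℝ} {S : Set α} (hS : MeasurableSet S)
    (hf : Integrable f μ) (hg : Integrable g μ) (hf0 : 0 ≤ f) (hg0 : 0 ≤ g)
    {a b : ℝ} (ha : 0 < a) (hb : 0 < b) (h : ∀ x ∈ S, a ≤ f x ∨ b ≤ g x) :
    μ.real S ≤ (∫ x, f x ∂μ) / a + (∫ x, g x ∂μ) / b := by
  have hpt : S.indicator 1 ≤ fun x => f x / a + g x / b := by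
    intro x
    have hfa : 0 ≤ f x / a := div_nonneg (hf0 x) ha.le
    have hgb : 0 ≤ g x / b := div_nonneg (hg0 x) hb.le
    by_cases hx : x ∈ S
    · rw [Set.indicator_of_mem hx, Pi.one_apply]
      rcases h x hx with hfx | hgx
      · linarith [(one_le_div ha).mpr hfx]
      · linarith [(one_le_div hb).mpr hgx]
    · rw [Set.indicator_of_notMem hx]
      positivity
  calc μ.real S = ∫ x, S.indicator 1 x ∂μ := (integral_indicator_one hS).symm
    _ ≤ ∫ x, (f x / a + g x / b) ∂μ :=
        integral_mono_of_nonneg (Eventually.of_forall (Set.indicator_nonneg (by simp)))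
          ((hf.div_const a).add (hg.div_const b)) (Eventually.of_forall hpt)
    _ = (∫ x, f x ∂μ) / a + (∫ x, g x ∂μ) / b := by
        rw [integral_add (hf.div_const a) (hg.div_const b), integral_div, integral_div]

theorem measureReal_eq_zero_of_eventually_rpow_le_or_rpow_le {E : Type*}
    [NormedAddCommGroup E] [NormedSpace ℝ E] [MeasurableSpace E] [BorelSpace E]
    [FiniteDimensional ℝ E] {μ : Measure E} [μ.IsAddHaarMeasure] {f g : E → ℝ}
    (hf : Integrable f μ) (hg : Integrable g μ) (hf0 : 0 ≤ f) (hg0 : 0 ≤ g)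
    {K : Set E} (hK : MeasurableSet K) {A B γ γ' : ℝ} (hA : 0 < A) (hB : 0 < B)
    (hγ : 0 < γ + Module.finrank ℝ E) (hγ' : 0 < γ' + Module.finrank ℝ E)
    (h : ∀ᶠ t in atTop, ∀ y ∈ K,
      A * t ^ γ ≤ f (t • y) ∨ B * t ^ γ' ≤ g (t • y)) :
    μ.real K = 0 := by
  set n : ℝ := (Module.finrank ℝ E : ℝ)
  have hbound : ∀ᶠ t in atTop, μ.real K ≤
      (∫ x, f x ∂μ) / A * t ^ (-(γ + n)) + (∫ x, g x ∂μ) / B * t ^ (-(γ' + n)) := by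
    filter_upwards [h, eventually_gt_atTop 0] with t ht ht0
    have hdil : μ.real (t • K) = t ^ n * μ.real K := by
      rw [measureReal_def, Measure.addHaar_smul_of_nonneg μ ht0.le, ENNReal.toReal_mul,
        ENNReal.toReal_ofReal (by positivity), ← measureReal_def, Real.rpow_natCast]
    have hcover := measureReal_le_integral_div_add_integral_div (hK.const_smul₀ t)
      hf hg hf0 hg0 (by positivity : 0 < A * t ^ γ) (by positivity : 0 < B * t ^ γ')
      (by rintro _ ⟨y, hy, rfl⟩; exact ht y hy)
    rw [hdil] at hcover
    rw [Real.rpow_neg ht0.le, Real.rpow_neg ht0.le, Real.rpow_add ht0, Real.rpow_add ht0]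
    calc μ.real K = t ^ n * μ.real K / t ^ n := by field_simp
      _ ≤ ((∫ x, f x ∂μ) / (A * t ^ γ) + (∫ x, g x ∂μ) / (B * t ^ γ')) / t ^ n := by
          gcongr
      _ = _ := by field_simp
  have hlim : Tendsto (fun t : ℝ =>
      (∫ x, f x ∂μ) / A * t ^ (-(γ + n)) + (∫ x, g x ∂μ) / B * t ^ (-(γ' + n)))
      atTop (𝓝 0) := by
    simpa using ((tendsto_rpow_neg_atTop hγ).const_mul _).add
      ((tendsto_rpow_neg_atTop hγ').const_mul _)
  exact le_antisymm (ge_of_tendsto hlim hbound) measureReal_nonneg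

lemma Real.rpow_min_zero_le_rpow {x R : ℝ} (s : ℝ) (hx : 1 ≤ x) (hR : x ≤ R) :
    R ^ min s 0 ≤ x ^ s := by
  rcases le_total 0 s with hs | hs
  · rw [min_eq_right hs, Real.rpow_zero]
    exact Real.one_le_rpow hx hs
  · rw [min_eq_left hs]
    exact Real.rpow_le_rpow_of_nonpos (by linarith) hR hs

lemma mul_rpow_le_rpow_mul_abs_rpow {ρ w C m t s p : ℝ} {d : ℕ} (hp : 0 ≤ p) (hC : 0 < C)
    (hm : 0 ≤ m) (ht : 0 < t) (hρ1 : 1 ≤ ρ) (hρ : ρ ≤ C * t) (hw : m * t ^ d ≤ |w|) :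
    (C ^ min s 0 * m) ^ p * t ^ ((min s 0 + d) * p) ≤ (ρ ^ s * |w|) ^ p := by
  have hsplit : (C * t) ^ min s 0 * (m * t ^ d) = C ^ min s 0 * m * t ^ (min s 0 + d) := by
    rw [Real.mul_rpow hC.le ht.le, Real.rpow_add ht, Real.rpow_natCast]
    ring
  calc (C ^ min s 0 * m) ^ p * t ^ ((min s 0 + d) * p)
      = ((C * t) ^ min s 0 * (m * t ^ d)) ^ p := by
        rw [hsplit, Real.mul_rpow (x := C ^ min s 0 * m) (by positivity) (by positivity),
          ← Real.rpow_mul ht.le]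
    _ ≤ (ρ ^ s * |w|) ^ p := by
        gcongr
        exact Real.rpow_min_zero_le_rpow s hρ1 hρ

lemma one_le_rho (x : Fin 3 → ℝ) : 1 ≤ rho x :=
  Real.one_le_sqrt.mpr (le_add_of_nonneg_right (Finset.sum_nonneg fun i _ => sq_nonneg (x i)))

lemma rho_le (x : Fin 3 → ℝ) : rho x ≤ 1 + 3 * ‖x‖ := by
  have hcoord : ∀ i, x i ^ 2 ≤ ‖x‖ ^ 2 := fun i => by
    rw [← sq_abs, ← Real.norm_eq_abs]
    exact pow_le_pow_left₀ (norm_nonneg _) (norm_le_pi_norm x i) 2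
  have hsum : ∑ i, x i ^ 2 ≤ 3 * ‖x‖ ^ 2 := by
    simpa using Finset.sum_le_sum fun i (_ : i ∈ Finset.univ) => hcoord i
  refine Real.sqrt_le_iff.mpr ⟨by positivity, ?_⟩
  nlinarith [norm_nonneg x]

lemma rho_smul_le {y : Fin 3 → ℝ} {R t : ℝ} (hy : ‖y‖ ≤ R) (ht : 1 ≤ t) :
    rho (t • y) ≤ (1 + 3 * R) * t := by
  have hty : ‖t • y‖ ≤ t * R := by
    rw [norm_smul, Real.norm_of_nonneg (by linarith)]
    gcongr
  linarith [rho_le (t • y)]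

lemma exponent_pos_of_floor_lt {n p k : ℝ} {d : ℕ} (hn : 0 < n) (hp : 0 < p)
    (h : (⌊1 - n / p - k⌋ : ℝ) < d) : 0 < (min (k - 1) 0 + d) * p + n := by
  have hlt : 1 - n / p - k < d := by
    exact_mod_cast Int.floor_lt.mp (by exact_mod_cast h : ⌊1 - n / p - k⌋ < (d : ℤ))
  have hnp : n / p * p = n := div_mul_cancel₀ n hp.ne'
  rcases min_cases (k - 1) 0 with ⟨hmin, _⟩ | ⟨hmin, _⟩ <;> rw [hmin] <;> nlinarith

theorem polynomial_in_sum_weighted_sobolev_degree_general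
    (p q : ℝ) (hp : 1 < p) (hq : 1 < q) (k k' : ℝ)
    (P : MvPolynomial (Fin 3) ℝ)
    (u v : (Fin 3 → ℝ) → ℝ)
    (hsum : ∀ x, MvPolynomial.eval x P = u x + v x)
    (hu0 : Integrable (fun x => (rho x ^ (k - 1) * |u x|) ^ p))
    (hv0 : Integrable (fun x => (rho x ^ (k' - 1) * |v x|) ^ q)) :
    P = 0 ∨ (P.totalDegree : ℝ) ≤ max (⌊1 - 3 / p - k⌋ : ℝ) (⌊1 - 3 / q - k'⌋ : ℝ) := by
  by_contra! hcon
  obtain ⟨hP, hdeg⟩ := hcon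
  rw [max_lt_iff] at hdeg
  obtain ⟨e, δ, hδ, c, hc, hgrowth⟩ := P.exists_pos_mul_pow_le_abs_eval_smul hP
  set C := 1 + 3 * (‖e‖ + δ)
  have hC : 0 < C := by positivity
  have hweight (s r : ℝ) (w : (Fin 3 → ℝ) → ℝ) : 0 ≤ fun x => (rho x ^ s * |w x|) ^ r :=
    fun x => by have := one_le_rho x; positivity
  have hK : 0 < volume.real (closedBall e δ) :=
    ENNReal.toReal_pos (measure_closedBall_pos volume e hδ).ne' measure_closedBall_lt_top.ne
  refine hK.ne' (measureReal_eq_zero_of_eventually_rpow_le_or_rpow_le hu0 hv0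
    (hweight (k - 1) p u) (hweight (k' - 1) q v) measurableSet_closedBall
    (A := (C ^ min (k - 1) 0 * (c / 2)) ^ p) (B := (C ^ min (k' - 1) 0 * (c / 2)) ^ q)
    (γ := (min (k - 1) 0 + P.totalDegree) * p) (γ' := (min (k' - 1) 0 + P.totalDegree) * q)
    (by positivity) (by positivity) ?_ ?_ ?_)
  · simpa using exponent_pos_of_floor_lt three_pos (by linarith) hdeg.1
  · simpa using exponent_pos_of_floor_lt three_pos (by linarith) hdeg.2
  filter_upwards [hgrowth, eventually_ge_atTop 1] with t ht ht1 y hy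
  have hρ := rho_smul_le (norm_le_of_mem_closedBall hy) ht1
  have hsplit : c / 2 * t ^ P.totalDegree ≤ |u (t • y)| ∨
      c / 2 * t ^ P.totalDegree ≤ |v (t • y)| := by
    by_contra! hsmall
    linarith [ht y hy, hsum (t • y) ▸ abs_add_le (u (t • y)) (v (t • y))]
  have ht0 : 0 < t := by linarith
  exact hsplit.imp
    (mul_rpow_le_rpow_mul_abs_rpow (by linarith) hC (by positivity) ht0 (one_le_rho _) hρ)
    (mul_rpow_le_rpow_mul_abs_rpow (by linarith) hC (by positivity) ht0 (one_le_rho _) hρ)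

/-- Any polynomial `λ` belonging to `W^{1,p}_k(ℝ³) + W^{1,q}_{k'}(ℝ³)` has degree
at most `max(⌊1 − 3/p − k⌋, ⌊1 − 3/q − k'⌋)` (with the convention that spaces of
negative-degree polynomials are `{0}`). -/
theorem polynomial_in_sum_weighted_sobolev_degree
    (p q : ℝ) (hp : 1 < p) (hq : 1 < q) (k k' : ℝ)
    (P : MvPolynomial (Fin 3) ℝ)
    (u v : (Fin 3 → ℝ) → ℝ)
    (hu : Differentiable ℝ u) (hv : Differentiable ℝ v)
    (hsum : ∀ x, MvPolynomial.eval x P = u x + v x)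
    (hu0 : Integrable (fun x => (rho x ^ (k - 1) * |u x|) ^ p))
    (hu1 : Integrable (fun x => (rho x ^ k * ‖fderiv ℝ u x‖) ^ p))
    (hv0 : Integrable (fun x => (rho x ^ (k' - 1) * |v x|) ^ q))
    (hv1 : Integrable (fun x => (rho x ^ k' * ‖fderiv ℝ v x‖) ^ q)) :
    P = 0 ∨ (P.totalDegree : ℝ) ≤ max (⌊1 - 3 / p - k⌋ : ℝ) (⌊1 - 3 / q - k'⌋ : ℝ) :=
  polynomial_in_sum_weighted_sobolev_degree_general p q hp hq k k' P u v hsum hu0 hv0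
end

section
/- Let X be a reflexive Banach space, M a reflexive Banach space, and a : X × M → ℝ a continuous bilinear form satisfying the inf-sup condition with constant β > 0 and such that the kernel V = {v ∈ X : a(v,w) = 0 for all w ∈ M} is trivial. Then for any g ∈ M' there exists a unique v ∈ X with a(v, w) = ⟨g, w⟩ for all w ∈ M, and ‖v‖_X ≤ (1/β)‖g‖_{M'}. -/
open NormedSpace

/-!
The inf-sup condition says exactly that `B := a.flip : M → X'` is bounded below by `β`, so `B` is
injective with closed range. A functional on `X'` annihilating the range is, by reflexivity of `X`,
evaluation at some `v` with `a v = 0`, hence zero; by Hahn–Banach the range is all of `X'`. So `B`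
is an isomorphism, and the solution is the `v ∈ X` representing `g ∘ B⁻¹ ∈ X''`. The norm bound
follows by testing `v` against a norming functional `B w`, for which `‖w‖ ≤ β⁻¹ ‖B w‖`.
-/

theorem Submodule.eq_top_of_isClosed_of_forall_dual_eq_zero {E : Type*} [TopologicalSpace E]
    [AddCommGroup E] [IsTopologicalAddGroup E] [Module ℝ E] [ContinuousSMul ℝ E]
    [LocallyConvexSpace ℝ E] {S : Submodule ℝ E} (hS : IsClosed (S : Set E))
    (h : ∀ φ : E →L[ℝ] ℝ, (∀ x ∈ S, φ x = 0) → φ = 0) : S = ⊤ := by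
  refine Submodule.eq_top_iff'.mpr fun x => ?_
  by_contra hx
  obtain ⟨φ, u, hφx, hφS⟩ := geometric_hahn_banach_point_closed S.convex hS hx
  have hu : u < 0 := by simpa using hφS 0 S.zero_mem
  -- a functional bounded below on a subspace vanishes there: otherwise it takes the value `u`
  have hφ : φ = 0 := h φ fun y hy => by
    by_contra hφy
    have := hφS _ (S.smul_mem (u / φ y) hy)
    rw [map_smul, smul_eq_mul, div_mul_cancel₀ _ hφy] at this
    exact this.false
  simp only [hφ, zero_apply] at hφx
  linarith

namespace ContinuousLinearMap

variable {X M : Type*} [NormedAddCommGroup X] [NormedSpace ℝ X]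
  [NormedAddCommGroup M] [NormedSpace ℝ M] (a : X →L[ℝ] M →L[ℝ] ℝ) {β : ℝ}

theorem mul_norm_le_norm_flip_of_le_iSup
    (hinfsup : ∀ w : M, w ≠ 0 → β ≤ ⨆ v : {v : X // v ≠ 0}, a v.1 w / (‖v.1‖ * ‖w‖))
    (w : M) : β * ‖w‖ ≤ ‖a.flip w‖ := by
  rcases eq_or_ne w 0 with rfl | hw
  · simp
  have hw' : 0 < ‖w‖ := norm_pos_iff.mpr hw
  rw [← le_div_iff₀ hw']
  refine (hinfsup w hw).trans (Real.iSup_le (fun v => ?_) (by positivity))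
  have hv : 0 < ‖v.1‖ := norm_pos_iff.mpr v.2
  rw [div_le_div_iff₀ (by positivity) hw', ← mul_assoc]
  gcongr
  exact (le_abs_self _).trans ((a.flip w).le_opNorm v.1)

theorem antilipschitzWith_flip (hβ : 0 < β) (hbound : ∀ w : M, β * ‖w‖ ≤ ‖a.flip w‖) :
    AntilipschitzWith ⟨β⁻¹, inv_nonneg.mpr hβ.le⟩ a.flip :=
  a.flip.antilipschitz_of_bound fun w => (le_inv_mul_iff₀ hβ).mpr (hbound w)

theorem range_flip_eq_top [CompleteSpace M]
    (hXrefl : Function.Surjective (inclusionInDoubleDual ℝ X))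
    (hker : ∀ v : X, (∀ w : M, a v w = 0) → v = 0) (hβ : 0 < β)
    (hbound : ∀ w : M, β * ‖w‖ ≤ ‖a.flip w‖) : a.flip.range = ⊤ := by
  refine Submodule.eq_top_of_isClosed_of_forall_dual_eq_zero
    ((a.antilipschitzWith_flip hβ hbound).isClosed_range a.flip.uniformContinuous) fun φ hφ => ?_
  obtain ⟨v, rfl⟩ := hXrefl φ
  rw [hker v fun w => hφ (a.flip w) ⟨w, rfl⟩, map_zero]

theorem norm_le_of_forall_apply_eq (hβ : 0 < β) (hbound : ∀ w : M, β * ‖w‖ ≤ ‖a.flip w‖)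
    (hsurj : a.flip.range = ⊤) {g : M →L[ℝ] ℝ} {v : X} (hv : ∀ w : M, a v w = g w) :
    ‖v‖ ≤ β⁻¹ * ‖g‖ := by
  obtain ⟨f, hf, hfv⟩ := exists_dual_vector'' ℝ v
  obtain ⟨w, rfl⟩ := LinearMap.range_eq_top.mp hsurj f
  calc ‖v‖ = g w := by rw [← hv]; exact hfv.symm
    _ ≤ ‖g‖ * ‖w‖ := (le_abs_self _).trans (g.le_opNorm w)
    _ ≤ ‖g‖ * (β⁻¹ * ‖a.flip w‖) := by gcongr; exact (le_inv_mul_iff₀ hβ).mpr (hbound w)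
    _ ≤ β⁻¹ * ‖g‖ := by
      rw [mul_left_comm]
      gcongr
      exact mul_le_of_le_one_right (norm_nonneg g) hf

theorem exists_forall_apply_eq [CompleteSpace M]
    (hXrefl : Function.Surjective (inclusionInDoubleDual ℝ X)) (hinj : a.flip.ker = ⊥)
    (hsurj : a.flip.range = ⊤) (g : M →L[ℝ] ℝ) : ∃ v : X, ∀ w : M, a v w = g w := by
  let e := ContinuousLinearEquiv.ofBijective a.flip hinj hsurj
  obtain ⟨v, hv⟩ := hXrefl (g.comp e.symm.toContinuousLinearMap)
  refine ⟨v, fun w => ?_⟩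
  simpa [e] using congrArg (fun φ => φ (a.flip w)) hv

end ContinuousLinearMap

theorem babuska_brezzi_trivial_kernel_general
    {X M : Type*} [NormedAddCommGroup X] [NormedSpace ℝ X]
    [NormedAddCommGroup M] [NormedSpace ℝ M] [CompleteSpace M]
    (hXrefl : Function.Surjective (inclusionInDoubleDual ℝ X))
    (a : X →L[ℝ] M →L[ℝ] ℝ)
    (hker : ∀ v : X, (∀ w : M, a v w = 0) → v = 0)
    (β : ℝ) (hβ : 0 < β)
    (hinfsup : ∀ w : M, w ≠ 0 →
      β ≤ ⨆ v : {v : X // v ≠ 0}, a v.1 w / (‖v.1‖ * ‖w‖)) :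
    ∀ g : M →L[ℝ] ℝ,
      (∃! v : X, ∀ w : M, a v w = g w) ∧
      (∀ v : X, (∀ w : M, a v w = g w) → ‖v‖ ≤ (1 / β) * ‖g‖) := by
  intro g
  have hbound := a.mul_norm_le_norm_flip_of_le_iSup hinfsup
  have hinj : a.flip.ker = ⊥ :=
    LinearMap.ker_eq_bot.mpr (a.antilipschitzWith_flip hβ hbound).injective
  have hsurj := a.range_flip_eq_top hXrefl hker hβ hbound
  obtain ⟨v, hv⟩ := a.exists_forall_apply_eq hXrefl hinj hsurj g
  refine ⟨⟨v, hv, fun v' hv' => ?_⟩, fun v' hv' => ?_⟩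
  · exact sub_eq_zero.mp (hker _ fun w => by simp [hv', hv])
  · rw [one_div]
    exact a.norm_le_of_forall_apply_eq hβ hbound hsurj hv'

/-- Babuška–Brezzi with trivial kernel: if `X, M` are reflexive Banach spaces,
`a : X × M → ℝ` a continuous bilinear form satisfying the inf-sup condition with
constant `β > 0`, and the kernel `V = {v : a(v,·) = 0}` is trivial, then for any
`g ∈ M'` there is a unique `v ∈ X` with `a(v,w) = ⟨g,w⟩` for all `w`, and
`‖v‖ ≤ (1/β)‖g‖`. -/
theorem babuska_brezzi_trivial_kernel
    {X M : Type*} [NormedAddCommGroup X] [NormedSpace ℝ X] [CompleteSpace X]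
    [NormedAddCommGroup M] [NormedSpace ℝ M] [CompleteSpace M]
    (hXrefl : Function.Surjective (inclusionInDoubleDual ℝ X))
    (hMrefl : Function.Surjective (inclusionInDoubleDual ℝ M))
    (a : X →L[ℝ] M →L[ℝ] ℝ)
    (hker : ∀ v : X, (∀ w : M, a v w = 0) → v = 0)
    (β : ℝ) (hβ : 0 < β)
    (hinfsup : ∀ w : M, w ≠ 0 →
      β ≤ ⨆ v : {v : X // v ≠ 0}, a v.1 w / (‖v.1‖ * ‖w‖)) :
    ∀ g : M →L[ℝ] ℝ,
      (∃! v : X, ∀ w : M, a v w = g w) ∧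
      (∀ v : X, (∀ w : M, a v w = g w) → ‖v‖ ≤ (1 / β) * ‖g‖) :=
  babuska_brezzi_trivial_kernel_general hXrefl a hker β hβ hinfsup
end
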